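/- With P a basis projection (P + ΓPΓ = 1), Q commuting with Γ, ranges 𝔭, 𝔮 in generic position, φ the operator with graph {(Qp, Q^⊥p) : p ∈ 𝔭}, and Δ_𝔭 the operator with graph {(PQp, PQ^⊥p) : p ∈ 𝔭}: (a) φ(Qp) = Δ_𝔭(PQp) − P^⊥Qp for all p ∈ 𝔭; (b) (φ*φ)(QPq) = Δ_𝔭(PQPq) + Γ Δ_𝔭^{-1}(PΓQPq) for all q ∈ 𝔮. -/

import Mathlib

/-!
Generic position makes `Q`, `PQ` and `P(1 - Q)` injective on `𝔭`, so `φ` and `Δ_𝔭` are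
single-valued, `Δ_𝔭` is injective, and every graph membership pins down a value. Then (a) is
the identity `(1 - Q)p = P(1 - Q)p - (1 - P)Qp` for `p ∈ 𝔭`. For (b), `φ(QPq) = (1 - Q)Pq`,
and since `𝔭ᗮ ⊓ 𝔮 = ⊥` the adjoint relation forces `φ*φ(QPq) = Q(1 - P)q`. The basis
condition says `ΓPΓ = 1 - P`, so `PΓQPq = P(1 - Q)PΓq`, whence `Δ_𝔭⁻¹(PΓQPq) = PQPΓq`, and
applying `Γ` gives `(1 - P)Q(1 - P)q`; adding `Δ_𝔭(PQPq) = P(1 - Q)Pq` yields `Q(1 - P)q`.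
-/

open scoped ComplexInnerProductSpace

/-- Composition of two operators given by their graphs (first apply `G`, then `H`). -/
def GraphComp {E : Type*} (G H : Set (E × E)) : Set (E × E) :=
  {z : E × E | ∃ w : E, (z.1, w) ∈ G ∧ (w, z.2) ∈ H}

open scoped InnerProductSpace

section ParamGraph

variable {α β : Type*} {s : Set α} {f g : α → β} {a : α} {x y : β}

/-- `φ` and `Δ_𝔭` are given by graphs of this form, with `s = 𝔭`. -/
def paramGraph (s : Set α) (f g : α → β) : Set (β × β) :=
  {z | ∃ p ∈ s, z = (f p, g p)}

theorem snd_eq_of_mem_paramGraph (hf : s.InjOn f) (ha : a ∈ s)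
    (h : (f a, y) ∈ paramGraph s f g) : y = g a := by
  obtain ⟨p, hp, hfp⟩ := h
  rw [Prod.mk.injEq] at hfp
  rw [hfp.2, hf hp ha hfp.1.symm]

theorem fst_eq_of_mem_paramGraph (hg : s.InjOn g) (ha : a ∈ s)
    (h : (x, g a) ∈ paramGraph s f g) : x = f a := by
  obtain ⟨p, hp, hgp⟩ := h
  rw [Prod.mk.injEq] at hgp
  rw [hgp.1, hg hp ha hgp.2.symm]

end ParamGraph

theorem apply_eq_sub_of_add_conj_eq {G : Type*} [AddCommGroup G] {Γ P : G → G}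
    (hΓ : Function.Involutive Γ) (hP : ∀ x, P x + Γ (P (Γ x)) = x) (x : G) :
    Γ (P x) = Γ x - P (Γ x) := by
  have h := hP (Γ x)
  rw [hΓ x] at h
  exact eq_sub_of_add_eq' h

section BasisProjection

variable {R M : Type*} [Ring R] [TopologicalSpace M] [AddCommGroup M] [IsTopologicalAddGroup M]
  [Module R M] {P Q : M →L[R] M} {Γ : M → M}

theorem conj_comp_apply (hΓ : Function.Involutive Γ) (hPΓ : ∀ x, P x + Γ (P (Γ x)) = x)
    (hQΓ : ∀ x, Q (Γ x) = Γ (Q x)) (x : M) : Γ (Q (P x)) = Q ((1 - P) (Γ x)) := by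
  rw [← hQΓ, apply_eq_sub_of_add_conj_eq hΓ hPΓ]
  rfl

theorem proj_conj_comp_proj_apply (hΓ : Function.Involutive Γ)
    (hPΓ : ∀ x, P x + Γ (P (Γ x)) = x) (hQΓ : ∀ x, Q (Γ x) = Γ (Q x)) (hP : IsIdempotentElem P)
    {q : M} (hq : Q q = q) : P (Γ (Q (P q))) = P ((1 - Q) (P (Γ q))) := by
  have hPP : ∀ x, P (P x) = P x := fun x => congrArg (· x) hP.eq
  simp [conj_comp_apply hΓ hPΓ hQΓ, hQΓ, hq, hPP]

theorem conj_proj_comp_proj_conj_apply (hΓ : Function.Involutive Γ)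
    (hPΓ : ∀ x, P x + Γ (P (Γ x)) = x) (hQΓ : ∀ x, Q (Γ x) = Γ (Q x)) (q : M) :
    Γ (P (Q (P (Γ q)))) = (1 - P) (Q ((1 - P) q)) := by
  simp [apply_eq_sub_of_add_conj_eq hΓ hPΓ, conj_comp_apply hΓ hPΓ hQΓ, hΓ q]

end BasisProjection

section GenericPosition

variable {𝕜 E : Type*} [RCLike 𝕜] [NormedAddCommGroup E] [InnerProductSpace 𝕜 E]
  {P Q : E →L[𝕜] E} {U V : Submodule 𝕜 E}

theorem Submodule.eq_of_forall_inner_eq_of_orthogonal_inf_eq_bot (h : Uᗮ ⊓ V = ⊥) {u v : E}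
    (hu : u ∈ V) (hv : v ∈ V) (huv : ∀ p ∈ U, ⟪p, u⟫_𝕜 = ⟪p, v⟫_𝕜) : u = v := by
  have hmem : u - v ∈ Uᗮ ⊓ V :=
    ⟨fun p hp => by rw [inner_sub_right, huv p hp, sub_self], V.sub_mem hu hv⟩
  rw [h, Submodule.mem_bot] at hmem
  exact sub_eq_zero.mp hmem

theorem LinearMap.IsSymmetric.injOn_of_inf_orthogonal_range_eq_bot
    (hQ : (Q : E →ₗ[𝕜] E).IsSymmetric) (h : U ⊓ (LinearMap.range (Q : E →ₗ[𝕜] E))ᗮ = ⊥) :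
    Set.InjOn Q U :=
  LinearMap.injOn_of_disjoint_ker (f := (Q : E →ₗ[𝕜] E)) le_rfl <| by
    rwa [disjoint_iff, ← hQ.orthogonal_range]

theorem ContinuousLinearMap.injOn_one_sub_of_inf_range_eq_bot
    (h : U ⊓ LinearMap.range (Q : E →ₗ[𝕜] E) = ⊥) : Set.InjOn ⇑(1 - Q) U :=
  LinearMap.injOn_of_disjoint_ker (f := ((1 - Q : E →L[𝕜] E) : E →ₗ[𝕜] E)) le_rfl <|
    disjoint_iff.mpr <| eq_bot_iff.mpr fun v ⟨hvU, hv⟩ =>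
      h ▸ ⟨hvU, v, (sub_eq_zero.mp hv).symm⟩

theorem LinearMap.IsSymmetricProjection.one_sub_apply_mem_orthogonal_range
    (hQ : (Q : E →ₗ[𝕜] E).IsSymmetricProjection) (x : E) :
    (1 - Q) x ∈ (LinearMap.range (Q : E →ₗ[𝕜] E))ᗮ := by
  rw [hQ.isSymmetric.orthogonal_range, LinearMap.mem_ker]
  have hQQ : Q (Q x) = Q x :=
    (LinearMap.IsIdempotentElem.mem_range_iff hQ.isIdempotentElem).mp ⟨x, rfl⟩
  simp [hQQ]

/-- The graph of the adjoint of an operator from `V` to `Vᗮ` with graph `G`. -/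
def adjointGraph (G : Set (E × E)) (V : Submodule 𝕜 E) : Set (E × E) :=
  {z | z.1 ∈ Vᗮ ∧ z.2 ∈ V ∧ ∀ w ∈ G, ⟪w.2, z.1⟫_𝕜 = ⟪w.1, z.2⟫_𝕜}

theorem eq_of_mem_adjointGraph_paramGraph (hP : (P : E →ₗ[𝕜] E).IsSymmetricProjection)
    (hQ : (Q : E →ₗ[𝕜] E).IsSymmetricProjection)
    (h : (LinearMap.range (P : E →ₗ[𝕜] E))ᗮ ⊓ LinearMap.range (Q : E →ₗ[𝕜] E) = ⊥) {q y : E}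
    (hq : q ∈ LinearMap.range (Q : E →ₗ[𝕜] E))
    (hy : ((1 - Q) (P q), y) ∈
      adjointGraph (paramGraph (LinearMap.range (P : E →ₗ[𝕜] E)) Q ⇑(1 - Q))
        (LinearMap.range (Q : E →ₗ[𝕜] E))) :
    y = Q ((1 - P) q) := by
  obtain ⟨-, hyQ, hadj⟩ := hy
  refine Submodule.eq_of_forall_inner_eq_of_orthogonal_inf_eq_bot h hyQ ⟨_, rfl⟩ fun p hp => ?_
  have hPs : ∀ x y, ⟪P x, y⟫_𝕜 = ⟪x, P y⟫_𝕜 := hP.isSymmetric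
  have hQs : ∀ x y, ⟪Q x, y⟫_𝕜 = ⟪x, Q y⟫_𝕜 := hQ.isSymmetric
  have hPp : P p = p := (LinearMap.IsIdempotentElem.mem_range_iff hP.isIdempotentElem).mp hp
  have hQq : Q q = q := (LinearMap.IsIdempotentElem.mem_range_iff hQ.isIdempotentElem).mp hq
  have hQy : Q y = y := (LinearMap.IsIdempotentElem.mem_range_iff hQ.isIdempotentElem).mp hyQ
  have hQQ : Q (Q (P q)) = Q (P q) :=
    (LinearMap.IsIdempotentElem.mem_range_iff hQ.isIdempotentElem).mp ⟨_, rfl⟩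
  calc ⟪p, y⟫_𝕜 = ⟪Q p, y⟫_𝕜 := by rw [hQs, hQy]
    _ = ⟪(1 - Q) p, (1 - Q) (P q)⟫_𝕜 := (hadj _ ⟨p, hp, rfl⟩).symm
    _ = ⟪p, Q ((1 - P) q)⟫_𝕜 := by
      simp only [sub_apply, one_apply_eq_self, map_sub, inner_sub_left, inner_sub_right]
      rw [hQs p, hQs p, hQQ, hQq, ← hPs, hPp]
      ring

theorem injOn_comp_of_inf_orthogonal_eq_bot (hP : (P : E →ₗ[𝕜] E).IsSymmetric)
    (hQ : (Q : E →ₗ[𝕜] E).IsSymmetric) (hU : U ⊓ (LinearMap.range (Q : E →ₗ[𝕜] E))ᗮ = ⊥)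
    (hPQ : (LinearMap.range (P : E →ₗ[𝕜] E))ᗮ ⊓ LinearMap.range (Q : E →ₗ[𝕜] E) = ⊥) :
    Set.InjOn (P ∘ Q) U :=
  (hP.injOn_of_inf_orthogonal_range_eq_bot ((inf_comm _ _).trans hPQ)).comp
    (hQ.injOn_of_inf_orthogonal_range_eq_bot hU) fun x _ => LinearMap.mem_range_self _ x

theorem injOn_comp_one_sub_of_inf_eq_bot (hP : (P : E →ₗ[𝕜] E).IsSymmetric)
    (hQ : (Q : E →ₗ[𝕜] E).IsSymmetricProjection) (hU : U ⊓ LinearMap.range (Q : E →ₗ[𝕜] E) = ⊥)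
    (hPQ : (LinearMap.range (P : E →ₗ[𝕜] E))ᗮ ⊓ (LinearMap.range (Q : E →ₗ[𝕜] E))ᗮ = ⊥) :
    Set.InjOn (P ∘ ⇑(1 - Q)) U :=
  (hP.injOn_of_inf_orthogonal_range_eq_bot ((inf_comm _ _).trans hPQ)).comp
    (ContinuousLinearMap.injOn_one_sub_of_inf_range_eq_bot hU)
    fun x _ => hQ.one_sub_apply_mem_orthogonal_range x

end GenericPosition

theorem phi_and_phi_star_phi_via_modular_operator_general
    {E : Type*} [NormedAddCommGroup E] [InnerProductSpace ℂ E] [CompleteSpace E]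
    (Γ : E → E)
    (hΓ_inv : ∀ x, Γ (Γ x) = x)
    (P : E →L[ℂ] E) (hP_proj : P ∘L P = P) (hP_sa : IsSelfAdjoint P)
    (hP_basis : ∀ x, P x + Γ (P (Γ x)) = x)
    (Q : E →L[ℂ] E) (hQ_proj : Q ∘L Q = Q) (hQ_sa : IsSelfAdjoint Q)
    (hQΓ : ∀ x, Q (Γ x) = Γ (Q x))
    (hgen1 : LinearMap.range (P : E →ₗ[ℂ] E) ⊓ LinearMap.range (Q : E →ₗ[ℂ] E) = ⊥)
    (hgen2 : LinearMap.range (P : E →ₗ[ℂ] E) ⊓ (LinearMap.range (Q : E →ₗ[ℂ] E))ᗮ = ⊥)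
    (hgen3 : (LinearMap.range (P : E →ₗ[ℂ] E))ᗮ ⊓ LinearMap.range (Q : E →ₗ[ℂ] E) = ⊥)
    (hgen4 : (LinearMap.range (P : E →ₗ[ℂ] E))ᗮ ⊓ (LinearMap.range (Q : E →ₗ[ℂ] E))ᗮ = ⊥)
    (graφ graφstar graΔ : Set (E × E))
    (hφ : graφ = {z : E × E | ∃ p ∈ LinearMap.range (P : E →ₗ[ℂ] E), z = (Q p, (1 - Q) p)})
    (hφstar : graφstar = {z : E × E | z.1 ∈ (LinearMap.range (Q : E →ₗ[ℂ] E))ᗮ ∧ z.2 ∈ LinearMap.range (Q : E →ₗ[ℂ] E) ∧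
      ∀ w ∈ graφ, ⟪w.2, z.1⟫ = ⟪w.1, z.2⟫})
    (hΔ : graΔ = {z : E × E | ∃ p ∈ LinearMap.range (P : E →ₗ[ℂ] E), z = (P (Q p), P ((1 - Q) p))}) :
    -- (a)  φ(Qp) = Δ_𝔭(PQp) − P⊥Qp
    (∀ p ∈ LinearMap.range (P : E →ₗ[ℂ] E), ∀ y z : E,
      (Q p, y) ∈ graφ → (P (Q p), z) ∈ graΔ → y = z - (1 - P) (Q p)) ∧
    -- (b)  (φ*φ)(QPq) = Δ_𝔭(PQPq) + Γ Δ_𝔭⁻¹(PΓQPq)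
    (∀ q ∈ LinearMap.range (Q : E →ₗ[ℂ] E), ∀ y z w : E,
      (Q (P q), y) ∈ GraphComp graφ graφstar →
      (P (Q (P q)), z) ∈ graΔ →
      (w, P (Γ (Q (P q)))) ∈ graΔ →
      y = z + Γ w) := by
  have hP : (P : E →ₗ[ℂ] E).IsSymmetricProjection :=
    ContinuousLinearMap.isStarProjection_iff_isSymmetricProjection.mp ⟨hP_proj, hP_sa⟩
  have hQ : (Q : E →ₗ[ℂ] E).IsSymmetricProjection :=
    ContinuousLinearMap.isStarProjection_iff_isSymmetricProjection.mp ⟨hQ_proj, hQ_sa⟩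
  have injQ := hQ.isSymmetric.injOn_of_inf_orthogonal_range_eq_bot hgen2
  have injPQ := injOn_comp_of_inf_orthogonal_eq_bot hP.isSymmetric hQ.isSymmetric hgen2 hgen3
  have injP1Q := injOn_comp_one_sub_of_inf_eq_bot hP.isSymmetric hQ hgen1 hgen4
  subst hφ hφstar hΔ
  refine ⟨fun p hp y z hy hz => ?_, fun q hq y z w hy hz hw => ?_⟩
  · have hPp : P p = p := (LinearMap.IsIdempotentElem.mem_range_iff hP.isIdempotentElem).mp hp
    rw [snd_eq_of_mem_paramGraph injQ hp hy, snd_eq_of_mem_paramGraph injPQ hp hz]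
    simp [hPp]
  · obtain ⟨w₀, hw₀, hy⟩ := hy
    dsimp only at hw₀ hy
    have hPq : P q ∈ LinearMap.range (P : E →ₗ[ℂ] E) := ⟨q, rfl⟩
    have hPΓq : P (Γ q) ∈ LinearMap.range (P : E →ₗ[ℂ] E) := ⟨Γ q, rfl⟩
    have hQq : Q q = q := (LinearMap.IsIdempotentElem.mem_range_iff hQ.isIdempotentElem).mp hq
    rw [snd_eq_of_mem_paramGraph injQ hPq hw₀] at hy
    rw [proj_conj_comp_proj_apply hΓ_inv hP_basis hQΓ hP_proj hQq] at hw
    rw [eq_of_mem_adjointGraph_paramGraph hP hQ hgen3 hq hy,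
      snd_eq_of_mem_paramGraph injPQ hPq hz, fst_eq_of_mem_paramGraph injP1Q hPΓq hw,
      conj_proj_comp_proj_conj_apply hΓ_inv hP_basis hQΓ]
    have hPP : ∀ x, P (P x) = P x := fun x => congrArg (· x) hP_proj
    simp [hQq, hPP]

/-- Corollary 4.12 (`Deltap`):
(a) `φ(Qp) = Δ_𝔭(PQp) − P⊥Qp` for all `p ∈ 𝔭`;
(b) `(φ*φ)(QPq) = Δ_𝔭(PQPq) + Γ Δ_𝔭⁻¹(PΓQPq)` for all `q ∈ 𝔮`. -/
theorem phi_and_phi_star_phi_via_modular_operator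
    {E : Type*} [NormedAddCommGroup E] [InnerProductSpace ℂ E] [CompleteSpace E]
    (Γ : E → E)
    (hΓ_add : ∀ x y, Γ (x + y) = Γ x + Γ y)
    (hΓ_smul : ∀ (c : ℂ) (x : E), Γ (c • x) = (starRingEnd ℂ) c • Γ x)
    (hΓ_inner : ∀ f h : E, ⟪Γ f, Γ h⟫ = ⟪h, f⟫)
    (hΓ_inv : ∀ x, Γ (Γ x) = x)
    (P : E →L[ℂ] E) (hP_proj : P ∘L P = P) (hP_sa : IsSelfAdjoint P)
    (hP_basis : ∀ x, P x + Γ (P (Γ x)) = x)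
    (Q : E →L[ℂ] E) (hQ_proj : Q ∘L Q = Q) (hQ_sa : IsSelfAdjoint Q)
    (hQΓ : ∀ x, Q (Γ x) = Γ (Q x))
    (hgen1 : LinearMap.range (P : E →ₗ[ℂ] E) ⊓ LinearMap.range (Q : E →ₗ[ℂ] E) = ⊥)
    (hgen2 : LinearMap.range (P : E →ₗ[ℂ] E) ⊓ (LinearMap.range (Q : E →ₗ[ℂ] E))ᗮ = ⊥)
    (hgen3 : (LinearMap.range (P : E →ₗ[ℂ] E))ᗮ ⊓ LinearMap.range (Q : E →ₗ[ℂ] E) = ⊥)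
    (hgen4 : (LinearMap.range (P : E →ₗ[ℂ] E))ᗮ ⊓ (LinearMap.range (Q : E →ₗ[ℂ] E))ᗮ = ⊥)
    (graφ graφstar graΔ : Set (E × E))
    (hφ : graφ = {z : E × E | ∃ p ∈ LinearMap.range (P : E →ₗ[ℂ] E), z = (Q p, (1 - Q) p)})
    (hφstar : graφstar = {z : E × E | z.1 ∈ (LinearMap.range (Q : E →ₗ[ℂ] E))ᗮ ∧ z.2 ∈ LinearMap.range (Q : E →ₗ[ℂ] E) ∧
      ∀ w ∈ graφ, ⟪w.2, z.1⟫ = ⟪w.1, z.2⟫})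
    (hΔ : graΔ = {z : E × E | ∃ p ∈ LinearMap.range (P : E →ₗ[ℂ] E), z = (P (Q p), P ((1 - Q) p))}) :
    -- (a)  φ(Qp) = Δ_𝔭(PQp) − P⊥Qp
    (∀ p ∈ LinearMap.range (P : E →ₗ[ℂ] E), ∀ y z : E,
      (Q p, y) ∈ graφ → (P (Q p), z) ∈ graΔ → y = z - (1 - P) (Q p)) ∧
    -- (b)  (φ*φ)(QPq) = Δ_𝔭(PQPq) + Γ Δ_𝔭⁻¹(PΓQPq)
    (∀ q ∈ LinearMap.range (Q : E →ₗ[ℂ] E), ∀ y z w : E,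
      (Q (P q), y) ∈ GraphComp graφ graφstar →
      (P (Q (P q)), z) ∈ graΔ →
      (w, P (Γ (Q (P q)))) ∈ graΔ →
      y = z + Γ w) :=
  phi_and_phi_star_phi_via_modular_operator_general Γ hΓ_inv P hP_proj hP_sa hP_basis Q hQ_proj
    hQ_sa hQΓ hgen1 hgen2 hgen3 hgen4 graφ graφstar graΔ hφ hφstar hΔ
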